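/- arXiv:2401.07761 — 4 statements merged into one kernel-verified Lean document; each statement's English description precedes it below -/
import Mathlib

section
/- The greedy choice function with transferable quotas is monotone with respect to quotas: if each grade group's quota is pointwise increased, the set of chosen children weakly grows in cardinality. -/
/-- Greedy choice: process children in priority order (the list `order`),
    accept a child from the applicant set iff its grade group's accepted
    count is still below the group's transferable quota. -/
def greedyAux {Child ι : Type} [DecidableEq Child] [DecidableEq ι]
    (group : Child → ι) (quota : ι → ℕ) :
    List Child → Finset Child → Finset Child → Finset Child
  | [], _, acc => acc
  | c :: rest, C', acc =>
      if c ∈ C' ∧ (acc.filter (fun x => group x = group c)).card < quota (group c)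
      then greedyAux group quota rest C' (insert c acc)
      else greedyAux group quota rest C' acc

/-- The choice function `Ch_d` of a daycare with priority list `order`,
    grade-group map `group` and transferable quotas `quota`. -/
def choice {Child ι : Type} [DecidableEq Child] [DecidableEq ι]
    (group : Child → ι) (quota : ι → ℕ) (order : List Child) (C' : Finset Child) :
    Finset Child :=
  greedyAux group quota order C' ∅

/-!
Run the greedy procedure with both quotas side by side. At every stage the set chosen under `quota`
is contained in the set chosen under `quota'`, and within each group `i` the children chosen only
under `quota'` number at most `quota' i - quota i`. Hence whenever the smaller quota admits a child,
so does the larger one; and when only the larger one admits it, the group is already full under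
`quota`, so the surplus stays within the quota difference.
-/

open Finset

section

variable {Child ι : Type} [DecidableEq ι] (group : Child → ι)

def groupCount (s : Finset Child) (i : ι) : ℕ := #{x ∈ s | group x = i}

lemma groupCount_mono {s t : Finset Child} (h : s ⊆ t) (i : ι) :
    groupCount group s i ≤ groupCount group t i :=
  card_le_card (filter_subset_filter _ h)

variable [DecidableEq Child]

lemma groupCount_sdiff_add {s t : Finset Child} (h : s ⊆ t) (i : ι) :
    groupCount group (t \ s) i + groupCount group s i = groupCount group t i := by
  unfold groupCount
  rw [← card_sdiff_add_card_eq_card (filter_subset_filter _ h)]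
  congr 2
  ext x
  simp only [mem_sdiff, mem_filter]
  tauto

variable {group} in
lemma groupCount_insert_of_ne {c : Child} {i : ι} (h : group c ≠ i) (s : Finset Child) :
    groupCount group (insert c s) i = groupCount group s i := by
  rw [groupCount, filter_insert, if_neg h, groupCount]

lemma groupCount_insert_le (c : Child) (s : Finset Child) (i : ι) :
    groupCount group (insert c s) i ≤ groupCount group s i + 1 := by
  rw [groupCount, filter_insert]
  split_ifs
  · exact card_insert_le _ _
  · exact Nat.le_succ _

lemma greedyAux_cons (quota : ι → ℕ) (c : Child) (l : List Child) (C' acc : Finset Child) :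
    greedyAux group quota (c :: l) C' acc =
      if c ∈ C' ∧ groupCount group acc (group c) < quota (group c)
      then greedyAux group quota l C' (insert c acc)
      else greedyAux group quota l C' acc := rfl

def ExtendsWithinQuota (quota quota' : ι → ℕ) (s t : Finset Child) : Prop :=
  s ⊆ t ∧ ∀ i, groupCount group (t \ s) i + quota i ≤ quota' i

variable {group}

namespace ExtendsWithinQuota

variable {quota quota' : ι → ℕ} {s t : Finset Child}

lemma empty (hQ : ∀ i, quota i ≤ quota' i) : ExtendsWithinQuota group quota quota' ∅ ∅ :=
  ⟨Subset.rfl, fun i => by simpa [groupCount] using hQ i⟩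

lemma groupCount_lt (h : ExtendsWithinQuota group quota quota' s t) {i : ι}
    (hs : groupCount group s i < quota i) : groupCount group t i < quota' i := by
  have := groupCount_sdiff_add group h.1 i
  have := h.2 i
  omega

lemma insert_insert (h : ExtendsWithinQuota group quota quota' s t) (c : Child) :
    ExtendsWithinQuota group quota quota' (insert c s) (insert c t) := by
  refine ⟨insert_subset_insert c h.1, fun i => le_trans ?_ (h.2 i)⟩
  rw [insert_sdiff_insert]
  gcongr
  exact groupCount_mono group (sdiff_subset_sdiff Subset.rfl (subset_insert c s)) i

lemma insert_right (h : ExtendsWithinQuota group quota quota' s t) {c : Child}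
    (hs : quota (group c) ≤ groupCount group s (group c))
    (ht : groupCount group t (group c) < quota' (group c)) :
    ExtendsWithinQuota group quota quota' s (insert c t) := by
  refine ⟨h.1.trans (subset_insert c t), fun i => ?_⟩
  have hsub : insert c t \ s ⊆ insert c (t \ s) := by
    intro x
    simp only [mem_sdiff, mem_insert]
    tauto
  have hle := groupCount_mono group hsub i
  by_cases hi : group c = i
  · subst hi
    have := groupCount_insert_le group c (t \ s) (group c)
    have := groupCount_sdiff_add group h.1 (group c)
    omega
  · rw [groupCount_insert_of_ne hi] at hle
    exact le_trans (Nat.add_le_add_right hle _) (h.2 i)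

end ExtendsWithinQuota

lemma greedyAux_subset_greedyAux {quota quota' : ι → ℕ} (C' : Finset Child) (l : List Child)
    {s t : Finset Child} (h : ExtendsWithinQuota group quota quota' s t) :
    greedyAux group quota l C' s ⊆ greedyAux group quota' l C' t := by
  induction l generalizing s t with
  | nil => exact h.1
  | cons c l ih =>
    rw [greedyAux_cons, greedyAux_cons]
    split_ifs with hs ht ht
    · exact ih (h.insert_insert c)
    · exact absurd ⟨hs.1, h.groupCount_lt hs.2⟩ ht
    · exact ih (h.insert_right (not_lt.mp fun hlt => hs ⟨ht.1, hlt⟩) ht.2)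
    · exact ih h

end

theorem choice_card_mono_quota_general {Child ι : Type} [DecidableEq Child] [DecidableEq ι]
    (order : List Child)
    (group : Child → ι) (quota quota' : ι → ℕ)
    (hQ : ∀ i, quota i ≤ quota' i)
    (C' : Finset Child) :
    (choice group quota order C').card ≤ (choice group quota' order C').card :=
  card_le_card (greedyAux_subset_greedyAux C' order (.empty hQ))

/-- the greedy choice function is monotone with respect to quotas:
    pointwise increasing every grade group's quota weakly increases the number
    of chosen children. -/
theorem choice_card_mono_quota {Child ι : Type} [DecidableEq Child] [DecidableEq ι]
    (order : List Child) (horder : order.Nodup)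
    (group : Child → ι) (quota quota' : ι → ℕ)
    (hQ : ∀ i, quota i ≤ quota' i)
    (C' : Finset Child) (hC' : ∀ c ∈ C', c ∈ order) :
    (choice group quota order C').card ≤ (choice group quota' order C').card :=
  choice_card_mono_quota_general order group quota quota' hQ C'
end

section
/- The greedy choice function with transferable quotas satisfies the irrelevance-of-rejected-contracts condition: if Ch_d(C') ⊆ C'' ⊆ C', then Ch_d(C'') = Ch_d(C'). -/
lemma greedyAux_subset {Child ι : Type} [DecidableEq Child] [DecidableEq ι]
    (group : Child → ι) (quota : ι → ℕ) :
    ∀ (l : List Child) (C' acc : Finset Child), acc ⊆ greedyAux group quota l C' acc := by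
  intro l
  induction l with
  | nil => intro C' acc; simp [greedyAux]
  | cons c rest ih =>
      intro C' acc
      simp only [greedyAux]
      split
      · exact (Finset.subset_insert c acc).trans (ih C' (insert c acc))
      · exact ih C' acc

lemma greedyAux_eq {Child ι : Type} [DecidableEq Child] [DecidableEq ι]
    (group : Child → ι) (quota : ι → ℕ) (C' C'' : Finset Child) (h2 : C'' ⊆ C') :
    ∀ (l : List Child) (acc : Finset Child),
      greedyAux group quota l C' acc ⊆ C'' →
      greedyAux group quota l C'' acc = greedyAux group quota l C' acc := by
  intro l
  induction l with
  | nil => intro acc _; rfl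
  | cons c rest ih =>
      intro acc hsub
      by_cases hcond : c ∈ C' ∧ (acc.filter (fun x => group x = group c)).card < quota (group c)
      · have hres : greedyAux group quota (c :: rest) C' acc
            = greedyAux group quota rest C' (insert c acc) := by
          simp [greedyAux, hcond]
        have hc'' : c ∈ C'' := by
          apply hsub
          rw [hres]
          exact greedyAux_subset group quota rest C' (insert c acc) (Finset.mem_insert_self c acc)
        have : greedyAux group quota (c :: rest) C'' acc
            = greedyAux group quota rest C'' (insert c acc) := by
          simp [greedyAux, hc'', hcond.2]
        rw [this, hres, ih (insert c acc) (hres ▸ hsub)]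
      · have hcond'' : ¬ (c ∈ C'' ∧ (acc.filter (fun x => group x = group c)).card < quota (group c)) := by
          intro h; exact hcond ⟨h2 h.1, h.2⟩
        have hres : greedyAux group quota (c :: rest) C' acc
            = greedyAux group quota rest C' acc := by
          simp only [greedyAux, if_neg hcond]
        rw [show greedyAux group quota (c :: rest) C'' acc
            = greedyAux group quota rest C'' acc from by simp only [greedyAux, if_neg hcond''],
          hres, ih acc (hres ▸ hsub)]

/-- irrelevance of rejected contracts:
    if `Ch_d(C') ⊆ C'' ⊆ C'`, then `Ch_d(C'') = Ch_d(C')`. -/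
theorem choice_irrelevance_of_rejected {Child ι : Type} [DecidableEq Child] [DecidableEq ι]
    (order : List Child) (horder : order.Nodup)
    (group : Child → ι) (quota : ι → ℕ)
    (C' C'' : Finset Child) (hC' : ∀ c ∈ C', c ∈ order)
    (h1 : choice group quota order C' ⊆ C'') (h2 : C'' ⊆ C') :
    choice group quota order C'' = choice group quota order C' := by
  exact greedyAux_eq group quota C' C'' h2 order ∅ h1
end

section
/- The greedy choice function with transferable quotas is substitutable: if a child c is chosen from a set C', then c is also chosen from any subset of C' containing c. -/
/-!
Run the greedy procedure on `C'` and on `C'' ⊆ C'` side by side. At every stage the run on `C''`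
has accepted every child of `C''` that the run on `C'` has accepted, and has accepted no more
children than it from any grade group. Both properties survive one more child: a child accepted
from `C'` finds at least as much room in its group in the `C''` run, and a child accepted only
from `C''` was refused from `C'` because its group was full there, so the count in the `C''` run
catches up with but does not exceed the count in the `C'` run.
-/

namespace Finset

variable {α : Type} [DecidableEq α] (p : α → Prop) [DecidablePred p]

lemma card_filter_insert_le (a : α) (s : Finset α) :
    #((insert a s).filter p) ≤ #(s.filter p) + if p a then 1 else 0 := by
  rw [filter_insert]
  split_ifs
  · exact card_insert_le _ _
  · exact Nat.le_add_right _ _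

lemma card_filter_insert_of_notMem {a : α} {s : Finset α} (ha : a ∉ s) :
    #((insert a s).filter p) = #(s.filter p) + if p a then 1 else 0 := by
  rw [filter_insert]
  split_ifs
  · exact card_insert_of_notMem fun h => ha (mem_filter.mp h).1
  · rfl

end Finset

namespace Choice

open Finset

variable {Child ι : Type} [DecidableEq ι]

structure Dominates (group : Child → ι) (C'' A' A'' : Finset Child) : Prop where
  subset : ∀ x ∈ A', x ∈ C'' → x ∈ A''
  card_le : ∀ g, #(A''.filter (fun x => group x = g)) ≤ #(A'.filter (fun x => group x = g))

lemma Dominates.empty (group : Child → ι) (C'' : Finset Child) : Dominates group C'' ∅ ∅ :=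
  ⟨by simp, by simp⟩

variable [DecidableEq Child]

def greedyStep (group : Child → ι) (quota : ι → ℕ) (C : Finset Child) (a : Child)
    (acc : Finset Child) : Finset Child :=
  if a ∈ C ∧ #(acc.filter (fun x => group x = group a)) < quota (group a) then insert a acc
  else acc

lemma greedyAux_cons (group : Child → ι) (quota : ι → ℕ) (a : Child) (l : List Child)
    (C acc : Finset Child) :
    greedyAux group quota (a :: l) C acc
      = greedyAux group quota l C (greedyStep group quota C a acc) := by
  rw [greedyAux, greedyStep]
  split_ifs <;> rfl

namespace Dominates

variable {group : Child → ι} {C'' A' A'' : Finset Child} {a : Child}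

lemma insert_both (h : Dominates group C'' A' A'') (ha : a ∈ C'') :
    Dominates group C'' (insert a A') (insert a A'') := by
  by_cases haA' : a ∈ A'
  · rw [insert_eq_of_mem haA', insert_eq_of_mem (h.subset a haA' ha)]
    exact h
  refine ⟨fun x hx hxC => ?_, fun g => ?_⟩
  · rcases mem_insert.mp hx with rfl | hx
    · exact mem_insert_self _ _
    · exact mem_insert_of_mem (h.subset x hx hxC)
  · rw [card_filter_insert_of_notMem _ haA']
    exact (card_filter_insert_le _ a A'').trans (Nat.add_le_add_right (h.card_le g) _)

lemma insert_left (h : Dominates group C'' A' A'') (ha : a ∉ C'') :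
    Dominates group C'' (insert a A') A'' := by
  refine ⟨fun x hx hxC => ?_, fun g => (h.card_le g).trans ?_⟩
  · rcases mem_insert.mp hx with rfl | hx
    · exact absurd hxC ha
    · exact h.subset x hx hxC
  · gcongr
    exact subset_insert _ _

lemma insert_right {quota : ι → ℕ} (h : Dominates group C'' A' A'')
    (hroom : #(A''.filter (fun x => group x = group a)) < quota (group a))
    (hfull : quota (group a) ≤ #(A'.filter (fun x => group x = group a))) :
    Dominates group C'' A' (insert a A'') := by
  refine ⟨fun x hx hxC => mem_insert_of_mem (h.subset x hx hxC), fun g => ?_⟩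
  refine (card_filter_insert_le _ a A'').trans ?_
  split_ifs with hg
  · subst hg
    omega
  · exact h.card_le g

lemma greedyStep {quota : ι → ℕ} {C' : Finset Child} (hsub : C'' ⊆ C')
    (h : Dominates group C'' A' A'') :
    Dominates group C'' (greedyStep group quota C' a A') (greedyStep group quota C'' a A'') := by
  unfold Choice.greedyStep
  by_cases h' : a ∈ C' ∧ #(A'.filter (fun x => group x = group a)) < quota (group a)
  · rw [if_pos h']
    by_cases haC : a ∈ C''
    · rw [if_pos ⟨haC, (h.card_le _).trans_lt h'.2⟩]
      exact h.insert_both haC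
    · rw [if_neg (fun h'' => haC h''.1)]
      exact h.insert_left haC
  · rw [if_neg h']
    split_ifs with h''
    · exact h.insert_right h''.2 (not_lt.mp fun hlt => h' ⟨hsub h''.1, hlt⟩)
    · exact h

lemma greedyAux {quota : ι → ℕ} {C' : Finset Child} (hsub : C'' ⊆ C') (l : List Child)
    (h : Dominates group C'' A' A'') :
    Dominates group C'' (_root_.greedyAux group quota l C' A')
      (_root_.greedyAux group quota l C'' A'') := by
  induction l generalizing A' A'' with
  | nil => exact h
  | cons a l ih =>
    rw [greedyAux_cons, greedyAux_cons]
    exact ih (h.greedyStep hsub)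

end Dominates

end Choice

theorem choice_substitutable_general {Child ι : Type} [DecidableEq Child] [DecidableEq ι]
    (order : List Child)
    (group : Child → ι) (quota : ι → ℕ)
    (C' C'' : Finset Child)
    (c : Child) (hc : c ∈ choice group quota order C')
    (hcC'' : c ∈ C'') (hsub : C'' ⊆ C') :
    c ∈ choice group quota order C'' :=
  ((Choice.Dominates.empty group C'').greedyAux hsub order).subset c hc hcC''

/-- substitutability: if a child `c` is chosen from `C'`,
    then `c` is also chosen from any subset of `C'` containing `c`. -/
theorem choice_substitutable {Child ι : Type} [DecidableEq Child] [DecidableEq ι]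
    (order : List Child) (horder : order.Nodup)
    (group : Child → ι) (quota : ι → ℕ)
    (C' C'' : Finset Child) (hC' : ∀ c ∈ C', c ∈ order)
    (c : Child) (hc : c ∈ choice group quota order C')
    (hcC'' : c ∈ C'') (hsub : C'' ⊆ C') :
    c ∈ choice group quota order C'' :=
  choice_substitutable_general order group quota C' C'' c hc hcC'' hsub
end

section
/- For the greedy choice function with transferable quotas, the coalition condition C(f,p,d) ⊆ Ch_d(μ(d) ∪ C(f,p,d)) holds if and only if for every grade group G_d, the number of children of μ(d) in grade group G_d with higher priority than at least one applicant in C(f,p,d,G_d) plus |C(f,p,d,G_d)| is at most Q(d,G_d). -/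
open Finset

section Greedy

variable {Child ι : Type} [DecidableEq Child] [DecidableEq ι] (group : Child → ι)
  (Q : ι → ℕ)

theorem greedyAux_append (l₁ l₂ : List Child) (C acc : Finset Child) :
    greedyAux group Q (l₁ ++ l₂) C acc =
      greedyAux group Q l₂ C (greedyAux group Q l₁ C acc) := by
  induction l₁ generalizing acc with
  | nil => rfl
  | cons c l ih => simp only [List.cons_append, greedyAux]; split <;> apply ih

theorem mem_greedyAux_of_notMem {l : List Child} {a : Child} (ha : a ∉ l) (C acc : Finset Child) :
    a ∈ greedyAux group Q l C acc ↔ a ∈ acc := by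
  induction l generalizing acc with
  | nil => rfl
  | cons c l ih =>
    rw [List.mem_cons, not_or] at ha
    rw [greedyAux]
    split
    · rw [ih ha.2, mem_insert, or_iff_right ha.1]
    · exact ih ha.2 _

theorem mem_greedyAux_cons_self {l : List Child} {a : Child} (ha : a ∉ l) (C : Finset Child)
    {acc : Finset Child} (hacc : a ∉ acc) :
    a ∈ greedyAux group Q (a :: l) C acc ↔
      a ∈ C ∧ #{x ∈ acc | group x = group a} < Q (group a) := by
  rw [greedyAux]
  split
  · simpa [mem_greedyAux_of_notMem group Q ha] using ‹_›
  · simp only [mem_greedyAux_of_notMem group Q ha, hacc, false_iff]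
    assumption

/-- A group that has reached its quota accepts nobody more, hence the `min`. -/
theorem card_filter_greedyAux {l : List Child} (hl : l.Nodup) (C : Finset Child)
    {acc : Finset Child} (hacc : ∀ c ∈ l, c ∉ acc) (g : ι)
    (hg : #{x ∈ acc | group x = g} ≤ Q g) :
    #{x ∈ greedyAux group Q l C acc | group x = g} =
      min (Q g) (#{x ∈ acc | group x = g} + l.countP (fun c => c ∈ C ∧ group c = g)) := by
  induction l generalizing acc with
  | nil => simp [greedyAux, hg]
  | cons c l ih =>
    obtain ⟨hcl, hl⟩ := List.nodup_cons.1 hl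
    have hacc' : ∀ x ∈ l, x ∉ acc := fun x hx => hacc x (List.mem_cons_of_mem c hx)
    rw [greedyAux, List.countP_cons]
    split
    case isTrue hc =>
      have hins : ∀ x ∈ l, x ∉ insert c acc := fun x hx => by
        rw [mem_insert, not_or]; exact ⟨ne_of_mem_of_not_mem hx hcl, hacc' x hx⟩
      have hcacc : c ∉ acc := hacc c List.mem_cons_self
      by_cases hcg : group c = g
      · subst hcg
        have hcard : #{x ∈ insert c acc | group x = group c} =
            #{x ∈ acc | group x = group c} + 1 := by
          rw [filter_insert, if_pos rfl, card_insert_of_notMem (by simp [hcacc])]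
        rw [ih hl hins (by omega), hcard]
        simp only [hc.1, and_self, decide_true, ↓reduceIte]
        omega
      · rw [ih hl hins (by rwa [filter_insert, if_neg hcg]), filter_insert, if_neg hcg]
        simp [hcg]
    case isFalse hc =>
      rw [ih hl hacc' hg]
      by_cases hcg : c ∈ C ∧ group c = g
      · obtain ⟨hcC, rfl⟩ := hcg
        have hfull : #{x ∈ acc | group x = group c} = Q (group c) := by
          have := not_and.1 hc hcC; omega
        simp [hfull, hcC]
      · simp [hcg]

end Greedy

section Choice

variable {Child ι : Type} [DecidableEq Child] [DecidableEq ι] (group : Child → ι)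

def higherInGroup (order : List Child) (S : Finset Child) (a : Child) : Finset Child :=
  {c ∈ S | group c = group a ∧ order.idxOf c < order.idxOf a}

theorem countP_take_idxOf {order : List Child} (horder : order.Nodup) (hmem : ∀ c, c ∈ order)
    (C : Finset Child) (a : Child) :
    (order.take (order.idxOf a)).countP (fun c => c ∈ C ∧ group c = group a) =
      #(higherInGroup group order C a) := by
  have hnd : (order.take (order.idxOf a)).Nodup := horder.sublist (List.take_sublist _ _)
  rw [List.countP_eq_length_filter, ← List.toFinset_card_of_nodup (hnd.filter _),
    List.toFinset_filter]
  congr 1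
  ext x
  simp only [higherInGroup, mem_filter, List.mem_toFinset, List.mem_take_iff_idxOf_lt (hmem x),
    decide_eq_true_eq]
  tauto

theorem mem_choice_iff (Q : ι → ℕ) {order : List Child} (horder : order.Nodup)
    (hmem : ∀ c, c ∈ order) {C : Finset Child} {a : Child} (ha : a ∈ C) :
    a ∈ choice group Q order C ↔ #(higherInGroup group order C a) < Q (group a) := by
  set n := order.idxOf a
  have hn : n < order.length := List.idxOf_lt_length_iff.2 (hmem a)
  have hdrop : order.drop n = a :: order.drop (n + 1) := by
    rw [List.drop_eq_getElem_cons hn, List.getElem_idxOf hn]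
  have ha_take : a ∉ order.take n := by simp [List.mem_take_iff_idxOf_lt (hmem a), n]
  have ha_drop : a ∉ order.drop (n + 1) :=
    (List.nodup_cons.1 (hdrop ▸ horder.sublist (List.drop_sublist n order))).1
  have hnd_take : (order.take n).Nodup := horder.sublist (List.take_sublist _ _)
  have hchoice : choice group Q order C =
      greedyAux group Q (a :: order.drop (n + 1)) C (greedyAux group Q (order.take n) C ∅) := by
    rw [choice, ← greedyAux_append, ← hdrop, List.take_append_drop]
  rw [hchoice,
    mem_greedyAux_cons_self group Q ha_drop C (by simp [mem_greedyAux_of_notMem group Q ha_take]),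
    card_filter_greedyAux group Q hnd_take C (by simp) _ (by simp),
    countP_take_idxOf group horder hmem]
  simp only [ha, true_and, filter_empty, card_empty, zero_add]
  omega

end Choice

section Counting

variable {Child ι : Type} [DecidableEq Child] [DecidableEq ι] (group : Child → ι)
  (order : List Child)

def outranked (μd A : Finset Child) (i : ι) : Finset Child :=
  {c ∈ μd | group c = i ∧ ∃ b ∈ A, group b = i ∧ order.idxOf c < order.idxOf b}

variable {μd A : Finset Child} {a : Child}

theorem card_higherInGroup_lt (ha : a ∈ A) :
    #(higherInGroup group order (μd ∪ A) a) <
      #(outranked group order μd A (group a)) + #{b ∈ A | group b = group a} := by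
  set M := outranked group order μd A (group a)
  set N := {b ∈ A | group b = group a}
  have haN : a ∈ N := mem_filter.2 ⟨ha, rfl⟩
  have hsub : higherInGroup group order (μd ∪ A) a ⊆ M ∪ N.erase a := by
    intro c hc
    simp only [higherInGroup, mem_filter, mem_union] at hc
    obtain ⟨hμd | hA, hg, hlt⟩ := hc
    · exact mem_union_left _ (mem_filter.2 ⟨hμd, hg, a, ha, rfl, hlt⟩)
    · exact mem_union_right _
        (mem_erase.2 ⟨fun h => by simp [h] at hlt, mem_filter.2 ⟨hA, hg⟩⟩)
  calc #(higherInGroup group order (μd ∪ A) a)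
      ≤ #(M ∪ N.erase a) := card_le_card hsub
    _ ≤ #M + #(N.erase a) := card_union_le _ _
    _ < #M + #N := Nat.add_lt_add_left (card_erase_lt_of_mem haN) _

theorem card_higherInGroup_add_one (hdisj : Disjoint μd A) (ha : a ∈ A)
    (hlast : ∀ b ∈ A, group b = group a → b ≠ a → order.idxOf b < order.idxOf a) :
    #(higherInGroup group order (μd ∪ A) a) + 1 =
      #(outranked group order μd A (group a)) + #{b ∈ A | group b = group a} := by
  set M := outranked group order μd A (group a)
  set N := {b ∈ A | group b = group a}
  have haN : a ∈ N := mem_filter.2 ⟨ha, rfl⟩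
  have heq : higherInGroup group order (μd ∪ A) a = M ∪ N.erase a := by
    ext c
    simp only [higherInGroup, M, N, outranked, mem_filter, mem_union, mem_erase]
    constructor
    · rintro ⟨hμd | hA, hg, hlt⟩
      · exact Or.inl ⟨hμd, hg, a, ha, rfl, hlt⟩
      · exact Or.inr ⟨fun h => by simp [h] at hlt, hA, hg⟩
    · rintro (⟨hμd, hg, b, hb, hbg, hlt⟩ | ⟨hca, hA, hg⟩)
      · refine ⟨Or.inl hμd, hg, ?_⟩
        rcases eq_or_ne b a with rfl | hba
        · exact hlt
        · exact hlt.trans (hlast b hb hbg hba)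
      · exact ⟨Or.inr hA, hg, hlast c hA hg hca⟩
  have hMN : Disjoint M (N.erase a) :=
    disjoint_of_subset_left (filter_subset _ _)
      (disjoint_of_subset_right ((erase_subset _ _).trans (filter_subset _ _)) hdisj)
  rw [heq, card_union_of_disjoint hMN, add_assoc, card_erase_add_one haN]

end Counting

theorem coalition_condition_iff_counting_general
    {Child ι : Type} [DecidableEq Child] [DecidableEq ι]
    (order : List Child) (horder : order.Nodup) (hmem : ∀ c : Child, c ∈ order)
    (group : Child → ι) (Q : ι → ℕ)
    (μd A : Finset Child)
    (hdisj : Disjoint μd A) :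
    (A ⊆ choice group Q order (μd ∪ A)
    ↔
    ∀ i, (μd.filter (fun c => group c = i ∧
            ∃ a ∈ A, group a = i ∧ order.idxOf c < order.idxOf a)).card
          + (A.filter (fun a => group a = i)).card ≤ Q i) := by
  change _ ↔ ∀ i, #(outranked group order μd A i) + #{a ∈ A | group a = i} ≤ Q i
  constructor
  · intro hsub i
    by_cases hN : (A.filter (fun a => group a = i)).Nonempty
    · obtain ⟨a, haN, hmax⟩ := exists_max_image _ order.idxOf hN
      obtain ⟨ha, rfl⟩ := mem_filter.1 haN
      have hlast : ∀ b ∈ A, group b = group a → b ≠ a → order.idxOf b < order.idxOf a :=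
        fun b hb hbg hba => (hmax b (mem_filter.2 ⟨hb, hbg⟩)).lt_of_ne
          (fun h => hba ((List.idxOf_inj (hmem b)).1 h))
      have hchosen := (mem_choice_iff group Q horder hmem (mem_union_right μd ha)).1 (hsub ha)
      have hcount := card_higherInGroup_add_one group order hdisj ha hlast
      omega
    · rw [not_nonempty_iff_eq_empty, filter_eq_empty_iff] at hN
      have hM : outranked group order μd A i = ∅ :=
        filter_eq_empty_iff.2 fun _ _ ⟨_, b, hb, hbg, _⟩ => hN hb hbg
      simp [hM, filter_eq_empty_iff.2 hN]
  · intro hcount a ha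
    rw [mem_choice_iff group Q horder hmem (mem_union_right μd ha)]
    have := card_higherInGroup_lt group order (μd := μd) ha
    have := hcount (group a)
    omega

/-- for the greedy choice function with transferable quotas, the coalition
    condition `C(f,p,d) ⊆ Ch_d(μ(d) ∪ C(f,p,d))` holds iff for every grade group `i`,
    the number of children of `μ(d)` in grade group `i` that have higher priority than
    at least one applicant of grade group `i`, plus the number of applicants in group `i`,
    is at most the transferable quota `Q i`. -/
theorem coalition_condition_iff_counting
    {Child ι : Type} [DecidableEq Child] [DecidableEq ι]
    (order : List Child) (horder : order.Nodup) (hmem : ∀ c : Child, c ∈ order)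
    (group : Child → ι) (Q : ι → ℕ)
    (μd A : Finset Child)
    (hdisj : Disjoint μd A)
    (hcap : ∀ i, (μd.filter (fun c => group c = i)).card ≤ Q i) :
    (A ⊆ choice group Q order (μd ∪ A)
    ↔
    ∀ i, (μd.filter (fun c => group c = i ∧
            ∃ a ∈ A, group a = i ∧ order.idxOf c < order.idxOf a)).card
          + (A.filter (fun a => group a = i)).card ≤ Q i) :=
  coalition_condition_iff_counting_general order horder hmem group Q μd A hdisj
end
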